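/- arXiv:2007.14785 — 6 statements merged into one kernel-verified Lean document; each statement's English description precedes it below -/
import Mathlib

section
/- Let p be prime, ξ ∈ ℚ_p with |ξ|_p = 1, and q = p_0, p_1, …, p_n integers such that |q·ξ^j − p_j|_p < ε for j = 1, …, n, where ε > 0. Then for every j = 1, …, n−1, the integer Δ_j := p_{j−1}·p_{j+1} − p_j² satisfies |Δ_j|_p < ε. -/
/-- If `|q ξ^j − p_j|_p < ε` for `j = 1, …, n` and `|ξ|_p = 1`, then the Hankel minors
`Δ_j = p_{j−1} p_{j+1} − p_j²` satisfy `|Δ_j|_p < ε` for `j = 1, …, n−1`. -/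
theorem stmt2 (p : ℕ) [Fact p.Prime] (ξ : ℚ_[p]) (n : ℕ) (q : ℤ) (P : ℕ → ℤ)
    (hP0 : P 0 = q) (ε : ℝ) (hε : 0 < ε) (hξ : ‖ξ‖ = 1)
    (h : ∀ j, 1 ≤ j → j ≤ n → ‖(q : ℚ_[p]) * ξ ^ j - (P j : ℚ_[p])‖ < ε) :
    ∀ j, 1 ≤ j → j ≤ n - 1 →
      ‖((P (j - 1) * P (j + 1) - (P j) ^ 2 : ℤ) : ℚ_[p])‖ < ε := by
  have key : ∀ k, 1 ≤ k → k ≤ n → ‖(P k : ℚ_[p]) - (P (k - 1) : ℚ_[p]) * ξ‖ < ε := by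
    intro k hk1 hkn
    obtain ⟨m, rfl⟩ : ∃ m, k = m + 1 := ⟨k - 1, by omega⟩
    simp only [Nat.add_sub_cancel]
    rcases Nat.eq_zero_or_pos m with hm | hm
    · subst hm
      have := h 1 le_rfl hkn
      rw [norm_sub_rev]
      simpa [hP0] using this
    · have e : (P (m + 1) : ℚ_[p]) - (P m : ℚ_[p]) * ξ =
          -((q : ℚ_[p]) * ξ ^ (m + 1) - (P (m + 1) : ℚ_[p]))
            + ξ * ((q : ℚ_[p]) * ξ ^ m - (P m : ℚ_[p])) := by ring
      rw [e]
      calc ‖-((q : ℚ_[p]) * ξ ^ (m + 1) - (P (m + 1) : ℚ_[p]))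
            + ξ * ((q : ℚ_[p]) * ξ ^ m - (P m : ℚ_[p]))‖
          ≤ max ‖-((q : ℚ_[p]) * ξ ^ (m + 1) - (P (m + 1) : ℚ_[p]))‖
              ‖ξ * ((q : ℚ_[p]) * ξ ^ m - (P m : ℚ_[p]))‖ := Padic.nonarchimedean _ _
        _ < ε := by
            rw [max_lt_iff, norm_neg, norm_mul, hξ, one_mul]
            exact ⟨h (m + 1) (by omega) hkn, h m hm (by omega)⟩
  intro j hj1 hjn
  have hn : 2 ≤ n := by omega
  have e : ((P (j - 1) * P (j + 1) - (P j) ^ 2 : ℤ) : ℚ_[p]) =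
      (P (j - 1) : ℚ_[p]) * ((P (j + 1) : ℚ_[p]) - (P j : ℚ_[p]) * ξ)
        - (P j : ℚ_[p]) * ((P j : ℚ_[p]) - (P (j - 1) : ℚ_[p]) * ξ) := by
    push_cast; ring
  rw [e]
  have h1 : ‖(P (j - 1) : ℚ_[p]) * ((P (j + 1) : ℚ_[p]) - (P j : ℚ_[p]) * ξ)‖ < ε := by
    rw [norm_mul]
    calc ‖(P (j - 1) : ℚ_[p])‖ * ‖(P (j + 1) : ℚ_[p]) - (P j : ℚ_[p]) * ξ‖
        ≤ 1 * ‖(P (j + 1) : ℚ_[p]) - (P j : ℚ_[p]) * ξ‖ := by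
          gcongr; exact Padic.norm_int_le_one _
      _ < ε := by
          rw [one_mul]
          have := key (j + 1) (by omega) (by omega)
          simpa using this
  have h2 : ‖(P j : ℚ_[p]) * ((P j : ℚ_[p]) - (P (j - 1) : ℚ_[p]) * ξ)‖ < ε := by
    rw [norm_mul]
    calc ‖(P j : ℚ_[p])‖ * ‖(P j : ℚ_[p]) - (P (j - 1) : ℚ_[p]) * ξ‖
        ≤ 1 * ‖(P j : ℚ_[p]) - (P (j - 1) : ℚ_[p]) * ξ‖ := by
          gcongr; exact Padic.norm_int_le_one _
      _ < ε := by rw [one_mul]; exact key j hj1 (by omega)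
  calc ‖(P (j - 1) : ℚ_[p]) * ((P (j + 1) : ℚ_[p]) - (P j : ℚ_[p]) * ξ)
        - (P j : ℚ_[p]) * ((P j : ℚ_[p]) - (P (j - 1) : ℚ_[p]) * ξ)‖
      ≤ max ‖(P (j - 1) : ℚ_[p]) * ((P (j + 1) : ℚ_[p]) - (P j : ℚ_[p]) * ξ)‖
          ‖(P j : ℚ_[p]) * ((P j : ℚ_[p]) - (P (j - 1) : ℚ_[p]) * ξ)‖ := by
        rw [sub_eq_add_neg]
        have := Padic.nonarchimedean ((P (j - 1) : ℚ_[p]) * ((P (j + 1) : ℚ_[p]) - (P j : ℚ_[p]) * ξ))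
          (-((P j : ℚ_[p]) * ((P j : ℚ_[p]) - (P (j - 1) : ℚ_[p]) * ξ)))
        rwa [norm_neg] at this
    _ < ε := max_lt h1 h2
end

section
/- Let p be prime and ξ ∈ ℚ_p with |ξ|_p = 1. Suppose λ > 0 and that integers a, b not divisible by p satisfy |b·ξ − a|_p ≤ M^{−1−λ}, where M = max(|a|, |b|) ≥ 1. Then for every n ≥ 1 and every j = 1, …, n, |b^n·ξ^j − a^j·b^{n−j}|_p ≤ (max(|a^n|, |b^n|))^{−(1+λ)/n}. Consequently λ_n(ξ) ≥ (1 + λ_1(ξ))/n − 1. -/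
open scoped ENNReal

def SimAt (p : ℕ) [Fact p.Prime] (n : ℕ) (ξ : ℚ_[p]) (lam X : ℝ) : Prop :=
  ∃ x : ℕ → ℤ, (∀ i ≤ n, (|x i| : ℝ) ≤ X) ∧
    (∃ m, 1 ≤ m ∧ m ≤ n ∧ (x 0 : ℚ_[p]) * ξ ^ m ≠ (x m : ℚ_[p])) ∧
    (∀ m, 1 ≤ m → m ≤ n → ‖(x 0 : ℚ_[p]) * ξ ^ m - (x m : ℚ_[p])‖ ≤ X ^ (-lam - 1))

noncomputable def lambdaExp (p : ℕ) [Fact p.Prime] (n : ℕ) (ξ : ℚ_[p]) : ℝ≥0∞ :=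
  sSup {l : ℝ≥0∞ | ∃ lam : ℝ, l = ENNReal.ofReal lam ∧ ∀ X₀ : ℝ, ∃ X, X₀ ≤ X ∧ SimAt p n ξ lam X}

/-!
Since `bⁿξʲ - aʲbⁿ⁻ʲ = bⁿ⁻ʲ((bξ)ʲ - aʲ)` and, in an ultrametric ring, `‖xʲ - yʲ‖ ≤ ‖x - y‖` for
`‖x‖, ‖y‖ ≤ 1`, every approximation `a/b` of `ξ` gives the simultaneous approximation
`(bⁿ, abⁿ⁻¹, …, aⁿ)` of `(ξ, …, ξⁿ)` with the same error and height raised to the `n`-th power.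
For the exponents, `l ↦ (1 + l)/n - 1` is monotone and continuous on `ℝ≥0∞`, hence commutes
with the supremum defining `λ₁(ξ)`.
-/

section Ultrametric

variable {R : Type*}

lemma norm_pow_sub_pow_le_norm_sub [SeminormedRing R] [NormOneClass R] [IsUltrametricDist R]
    {x y : R} (hx : ‖x‖ ≤ 1) (hy : ‖y‖ ≤ 1) (j : ℕ) :
    ‖x ^ j - y ^ j‖ ≤ ‖x - y‖ := by
  induction j with
  | zero => simp
  | succ j ih =>
    have hsplit : x ^ (j + 1) - y ^ (j + 1) = x * (x ^ j - y ^ j) + (x - y) * y ^ j := by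
      rw [pow_succ', pow_succ']; noncomm_ring
    rw [hsplit]
    refine (IsUltrametricDist.norm_add_le_max _ _).trans (max_le ?_ ?_)
    · calc ‖x * (x ^ j - y ^ j)‖ ≤ ‖x‖ * ‖x ^ j - y ^ j‖ := norm_mul_le _ _
        _ ≤ 1 * ‖x - y‖ := by gcongr
        _ = ‖x - y‖ := one_mul _
    · calc ‖(x - y) * y ^ j‖ ≤ ‖x - y‖ * ‖y‖ ^ j :=
          (norm_mul_le _ _).trans (by gcongr; exact norm_pow_le _ _)
        _ ≤ ‖x - y‖ * 1 := by gcongr; exact pow_le_one₀ (norm_nonneg _) hy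
        _ = ‖x - y‖ := mul_one _

lemma intCast_pow_mul_pow_sub_intCast [CommRing R] (a b : ℤ) (ξ : R) {n j : ℕ}
    (hj : j ≤ n) :
    ((b ^ n : ℤ) : R) * ξ ^ j - ((a ^ j * b ^ (n - j) : ℤ) : R) =
      (b : R) ^ (n - j) * (((b : R) * ξ) ^ j - (a : R) ^ j) := by
  obtain ⟨k, rfl⟩ := Nat.exists_eq_add_of_le hj
  rw [Nat.add_sub_cancel_left]
  push_cast
  ring

lemma norm_intCast_pow_mul_pow_sub_le [SeminormedCommRing R] [NormOneClass R]
    [IsUltrametricDist R] (a b : ℤ) {ξ : R} (hξ : ‖ξ‖ ≤ 1) {n j : ℕ} (hj : j ≤ n) :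
    ‖((b ^ n : ℤ) : R) * ξ ^ j - ((a ^ j * b ^ (n - j) : ℤ) : R)‖ ≤ ‖(b : R) * ξ - (a : R)‖ := by
  have hb := IsUltrametricDist.norm_intCast_le_one R b
  have hbξ : ‖(b : R) * ξ‖ ≤ 1 := (norm_mul_le _ _).trans (mul_le_one₀ hb (norm_nonneg _) hξ)
  rw [intCast_pow_mul_pow_sub_intCast a b ξ hj]
  calc _ ≤ ‖(b : R)‖ ^ (n - j) * ‖((b : R) * ξ) ^ j - (a : R) ^ j‖ :=
        (norm_mul_le _ _).trans (by gcongr; exact norm_pow_le _ _)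
    _ ≤ 1 * ‖(b : R) * ξ - (a : R)‖ := by
        gcongr
        · exact pow_le_one₀ (norm_nonneg _) hb
        · exact norm_pow_sub_pow_le_norm_sub hbξ (IsUltrametricDist.norm_intCast_le_one R a) j
    _ = _ := one_mul _

end Ultrametric

lemma Real.pow_rpow_div_natCast {M : ℝ} (hM : 0 ≤ M) {n : ℕ} (hn : n ≠ 0) (c : ℝ) :
    (M ^ n) ^ (c / n) = M ^ c := by
  rw [← Real.rpow_natCast_mul hM, mul_div_cancel₀ _ (Nat.cast_ne_zero.mpr hn)]

lemma ENNReal.one_add_ofReal_div_sub_one_eq_zero {lam : ℝ} (hlam : lam ≤ 0) {n : ℕ} (hn : n ≠ 0) :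
    (1 + ENNReal.ofReal lam) / n - 1 = 0 := by
  rw [ENNReal.ofReal_of_nonpos hlam, add_zero]
  refine tsub_eq_zero_of_le (ENNReal.div_le_of_le_mul ?_)
  simpa using Nat.one_le_iff_ne_zero.mpr hn

lemma ENNReal.one_add_ofReal_div_sub_one_le (lam : ℝ) {n : ℕ} (hn : n ≠ 0) :
    (1 + ENNReal.ofReal lam) / n - 1 ≤ ENNReal.ofReal ((1 + lam) / n - 1) := by
  rcases le_total lam 0 with hlam | hlam
  · simp [ENNReal.one_add_ofReal_div_sub_one_eq_zero hlam hn]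
  · rw [ENNReal.ofReal_sub _ zero_le_one, ENNReal.ofReal_div_of_pos (by positivity),
      ENNReal.ofReal_add zero_le_one hlam, ENNReal.ofReal_one, ENNReal.ofReal_natCast]

section Padic

variable {p : ℕ} [Fact p.Prime]

lemma SimAt.pow {ξ : ℚ_[p]} (hξ : ‖ξ‖ ≤ 1) {lam X : ℝ} {n : ℕ} (hn : n ≠ 0)
    (h : SimAt p 1 ξ lam X) : SimAt p n ξ ((1 + lam) / n - 1) (X ^ n) := by
  obtain ⟨x, hbound, ⟨m, hm1, hm1', hne⟩, happrox⟩ := h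
  obtain rfl : m = 1 := by omega
  rw [pow_one] at hne
  have hX : 0 ≤ X := (abs_nonneg _).trans (hbound 0 (by omega))
  refine ⟨fun j => x 1 ^ j * x 0 ^ (n - j), fun i hi => ?_, ?_, fun j _ hj => ?_⟩
  · push_cast [abs_mul, abs_pow]
    calc |(x 1 : ℝ)| ^ i * |(x 0 : ℝ)| ^ (n - i) ≤ X ^ i * X ^ (n - i) := by
          gcongr
          exacts [hbound 1 le_rfl, hbound 0 (Nat.zero_le 1)]
      _ = X ^ n := by rw [← pow_add, Nat.add_sub_cancel' hi]
  · by_cases h0 : x 0 = 0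
    · have h1 : (x 1 : ℚ_[p]) ≠ 0 := by simpa [h0, eq_comm] using hne
      refine ⟨n, Nat.one_le_iff_ne_zero.mpr hn, le_rfl, ?_⟩
      simpa [h0, zero_pow hn, eq_comm] using pow_ne_zero n h1
    · refine ⟨1, le_rfl, Nat.one_le_iff_ne_zero.mpr hn, ?_⟩
      rw [← sub_ne_zero]
      have := intCast_pow_mul_pow_sub_intCast (x 1) (x 0) ξ (Nat.one_le_iff_ne_zero.mpr hn)
      simp only [Nat.sub_zero, pow_zero, one_mul, pow_one] at this ⊢
      rw [this]
      exact mul_ne_zero (pow_ne_zero _ (by exact_mod_cast h0)) (by rwa [sub_ne_zero])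
  · rw [show -((1 + lam) / n - 1) - 1 = (-lam - 1) / n by ring, Real.pow_rpow_div_natCast hX hn]
    simp only [pow_zero, one_mul, Nat.sub_zero]
    exact (norm_intCast_pow_mul_pow_sub_le (x 1) (x 0) hξ hj).trans (by
      simpa using happrox 1 le_rfl le_rfl)

lemma ofReal_le_lambdaExp {n : ℕ} {ξ : ℚ_[p]} {lam : ℝ}
    (h : ∀ X₀ : ℝ, ∃ X, X₀ ≤ X ∧ SimAt p n ξ lam X) : ENNReal.ofReal lam ≤ lambdaExp p n ξ :=
  le_sSup ⟨lam, rfl, h⟩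

lemma forall_exists_simAt_pow {ξ : ℚ_[p]} (hξ : ‖ξ‖ ≤ 1) {lam : ℝ} {n : ℕ} (hn : n ≠ 0)
    (h : ∀ X₀ : ℝ, ∃ X, X₀ ≤ X ∧ SimAt p 1 ξ lam X) :
    ∀ X₀ : ℝ, ∃ X, X₀ ≤ X ∧ SimAt p n ξ ((1 + lam) / n - 1) X := by
  intro X₀
  obtain ⟨X, hX, hsim⟩ := h (max X₀ 1)
  have hX₀ : X₀ ≤ X ^ n :=
    (le_max_left _ _).trans (hX.trans (le_self_pow₀ ((le_max_right _ _).trans hX) hn))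
  exact ⟨X ^ n, hX₀, hsim.pow hξ hn⟩

lemma one_add_lambdaExp_one_div_sub_one_le {ξ : ℚ_[p]} (hξ : ‖ξ‖ ≤ 1) {n : ℕ} (hn : n ≠ 0) :
    (1 + lambdaExp p 1 ξ) / n - 1 ≤ lambdaExp p n ξ := by
  set f : ℝ≥0∞ → ℝ≥0∞ := fun l => (1 + l) / n - 1
  have hmono : Monotone f := fun a b hab => by dsimp only [f]; gcongr
  have hcont : Continuous f :=
    ENNReal.continuous_sub_right 1 |>.comp <|
      (ENNReal.continuous_div_const _ (Nat.cast_ne_zero.mpr hn)).comp (continuous_const_add 1)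
  have hbot : f ⊥ = ⊥ := by
    simpa [f] using ENNReal.one_add_ofReal_div_sub_one_eq_zero le_rfl hn
  change f (sSup _) ≤ _
  rw [hmono.map_sSup_of_continuousAt hcont.continuousAt hbot]
  refine sSup_le ?_
  rintro _ ⟨_, ⟨lam, rfl, hlam⟩, rfl⟩
  calc f (ENNReal.ofReal lam) ≤ ENNReal.ofReal ((1 + lam) / n - 1) :=
        ENNReal.one_add_ofReal_div_sub_one_le lam hn
    _ ≤ lambdaExp p n ξ := ofReal_le_lambdaExp (forall_exists_simAt_pow hξ hn hlam)

end Padic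

theorem stmt5_general (p : ℕ) [Fact p.Prime] (ξ : ℚ_[p]) (hξ : ‖ξ‖ = 1) (lam : ℝ)
    (a b : ℤ) (M : ℝ)
    (hM : M = max (|a| : ℝ) (|b| : ℝ))
    (h : ‖(b : ℚ_[p]) * ξ - (a : ℚ_[p])‖ ≤ M ^ (-1 - lam)) :
    (∀ n : ℕ, 1 ≤ n → ∀ j, 1 ≤ j → j ≤ n →
      ‖((b ^ n : ℤ) : ℚ_[p]) * ξ ^ j - ((a ^ j * b ^ (n - j) : ℤ) : ℚ_[p])‖ ≤
        (M ^ (n : ℕ)) ^ (-(1 + lam) / n)) ∧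
    (∀ n : ℕ, 1 ≤ n → (1 + lambdaExp p 1 ξ) / n - 1 ≤ lambdaExp p n ξ) := by
  refine ⟨fun n hn j _ hjn => ?_, fun n hn =>
    one_add_lambdaExp_one_div_sub_one_le hξ.le (Nat.one_le_iff_ne_zero.mp hn)⟩
  have hM0 : 0 ≤ M := hM ▸ le_max_of_le_left (abs_nonneg _)
  rw [Real.pow_rpow_div_natCast hM0 (Nat.one_le_iff_ne_zero.mp hn), neg_add']
  exact (norm_intCast_pow_mul_pow_sub_le a b hξ.le hjn).trans h

/-- From a good rational approximation `a/b` to `ξ` one gets good simultaneous approximations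
to the powers of `ξ`; consequently `λ_n(ξ) ≥ (1 + λ_1(ξ))/n − 1`. -/
theorem stmt5 (p : ℕ) [Fact p.Prime] (ξ : ℚ_[p]) (hξ : ‖ξ‖ = 1) (lam : ℝ) (hlam : 0 < lam)
    (a b : ℤ) (ha : ¬ (p : ℤ) ∣ a) (hb : ¬ (p : ℤ) ∣ b) (M : ℝ)
    (hM : M = max (|a| : ℝ) (|b| : ℝ)) (hM1 : 1 ≤ M)
    (h : ‖(b : ℚ_[p]) * ξ - (a : ℚ_[p])‖ ≤ M ^ (-1 - lam)) :
    (∀ n : ℕ, 1 ≤ n → ∀ j, 1 ≤ j → j ≤ n →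
      ‖((b ^ n : ℤ) : ℚ_[p]) * ξ ^ j - ((a ^ j * b ^ (n - j) : ℤ) : ℚ_[p])‖ ≤
        (M ^ (n : ℕ)) ^ (-(1 + lam) / n)) ∧
    (∀ n : ℕ, 1 ≤ n → (1 + lambdaExp p 1 ξ) / n - 1 ≤ lambdaExp p n ξ) :=
  stmt5_general p ξ hξ lam a b M hM h
end

section
/- Let p be prime, n ≥ 2, ξ ∈ ℚ_p transcendental with λ_n(ξ) > 1. Then λ_1(ξ) ≥ n·(1 + λ_n(ξ)) − 1. -/
open scoped ENNReal

/-!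
Let `x` solve the simultaneous system at height `X` with exponent `λ > 1`. Each minor
`x i * x (j + 1) - x (i + 1) * x j` is an integer of absolute value at most `2 X²`, and writing it
through the small quantities `x (k + 1) - ξ x k` shows, by the ultrametric inequality, that its
`p`-adic norm is at most `max 1 ‖ξ‖ X^(-λ-1)`. Since a nonzero integer `z` has `|z| ‖z‖_p ≥ 1`,
all minors vanish once `X` is large, so `x = c (aⁿ, aⁿ⁻¹b, …, bⁿ)` with `a, b` coprime. One of
`a, b` is a `p`-adic unit, which gives `‖c‖_p ‖aξ - b‖ ≤ max 1 ‖ξ‖ X^(-λ-1)`, and with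
`H = max |a| |b|` and `|c| Hⁿ ≤ X` this becomes `‖aξ - b‖ ≤ max 1 ‖ξ‖ H^(-n(λ+1))`. As `ξ` is
transcendental, only finitely many pairs `(a, b)` of bounded height can approximate it this
well, so `H → ∞` with `X`.
-/

open Filter Topology

theorem Transcendental.intCast_mul_ne {K : Type*} [Field K] [CharZero K] {ξ : K}
    (hξ : Transcendental ℚ ξ) {a : ℤ} (ha : a ≠ 0) (b : ℤ) : (a : K) * ξ ≠ b := by
  intro h
  apply hξ
  rw [show ξ = algebraMap ℚ K (b / a) by
    rw [map_div₀, map_intCast, map_intCast, eq_div_iff (Int.cast_ne_zero.2 ha), mul_comm, h]]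
  exact isAlgebraic_algebraMap _

theorem Transcendental.exists_pos_le_norm_intCast_mul_sub {K : Type*} [NormedField K] [CharZero K]
    {ξ : K} (hξ : Transcendental ℚ ξ) (N : ℕ) :
    ∃ ε > 0, ∀ a b : ℤ, a ≠ 0 → |a| ≤ N → |b| ≤ N → ε ≤ ‖(a : K) * ξ - b‖ := by
  let s := (Finset.Icc (-N : ℤ) N ×ˢ Finset.Icc (-N : ℤ) N).filter (·.1 ≠ 0)
  have hpos : ∀ q ∈ s, ∀ᶠ ε in 𝓝[>] (0 : ℝ), ε ≤ ‖(q.1 : K) * ξ - q.2‖ := fun q hq =>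
    nhdsWithin_le_nhds <| eventually_le_nhds <| norm_pos_iff.2 <|
      sub_ne_zero.2 <| hξ.intCast_mul_ne (Finset.mem_filter.1 hq).2 _
  obtain ⟨ε, hε, hεpos⟩ := (((eventually_all_finset s).2 hpos).and self_mem_nhdsWithin).exists
  refine ⟨ε, hεpos, fun a b ha haN hbN => hε (a, b) ?_⟩
  simp only [s, Finset.mem_filter, Finset.mem_product, Finset.mem_Icc, ← abs_le]
  exact ⟨⟨haN, hbN⟩, ha⟩

theorem exists_isCoprime_eq_mul_pow_mul_pow {x : ℕ → ℤ} {n : ℕ} (hx0 : x 0 ≠ 0)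
    (h : ∀ m < n, x 0 * x (m + 1) = x 1 * x m) :
    ∃ a b c : ℤ, IsCoprime a b ∧ ∀ m ≤ n, x m = c * a ^ (n - m) * b ^ m := by
  obtain ⟨g, a, b, hg, hab, ha, hb⟩ := Int.exists_gcd_one' (Int.gcd_pos_of_ne_zero_left (x 1) hx0)
  replace hab : IsCoprime a b := Int.isCoprime_iff_gcd_eq_one.2 hab
  have ha0 : a ≠ 0 := by rintro rfl; simp [ha] at hx0
  have hstep : ∀ m < n, a * x (m + 1) = b * x m := fun m hm =>
    mul_right_cancel₀ (Int.natCast_ne_zero.2 hg.ne') <| by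
      linear_combination h m hm - x (m + 1) * ha + x m * hb
  have hpow : ∀ m ≤ n, x m * a ^ m = x 0 * b ^ m := by
    intro m hm
    induction m with
    | zero => simp
    | succ m ih =>
      calc x (m + 1) * a ^ (m + 1) = (a * x (m + 1)) * a ^ m := by ring
        _ = b * (x m * a ^ m) := by rw [hstep m hm]; ring
        _ = x 0 * b ^ (m + 1) := by rw [ih (by omega)]; ring
  obtain ⟨c, hc⟩ : a ^ n ∣ x 0 :=
    hab.pow.dvd_of_dvd_mul_right ⟨x n, (hpow n le_rfl).symm.trans (mul_comm _ _)⟩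
  refine ⟨a, b, c, hab, fun m hm => ?_⟩
  obtain ⟨k, rfl⟩ := Nat.exists_eq_add_of_le hm
  refine mul_right_cancel₀ (pow_ne_zero m ha0) ?_
  rw [hpow m hm, hc, Nat.add_sub_cancel_left]
  ring

theorem Real.mul_rpow_neg_le_rpow_neg_of_mul_le {u v X s : ℝ} (hu : 1 ≤ u) (hv : 0 < v)
    (huv : u * v ≤ X) (hs : 1 ≤ s) : u * X ^ (-s) ≤ v ^ (-s) := by
  have hu0 : 0 < u := zero_lt_one.trans_le hu
  calc u * X ^ (-s) ≤ u ^ s * (u * v) ^ (-s) :=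
        mul_le_mul (Real.self_le_rpow_of_one_le hu hs)
          (Real.rpow_le_rpow_of_nonpos (by positivity) huv (by linarith))
          (Real.rpow_nonneg ((by positivity : 0 ≤ u * v).trans huv) _) (by positivity)
    _ = v ^ (-s) := by
        rw [Real.mul_rpow hu0.le hv.le, ← mul_assoc, ← Real.rpow_add hu0, add_neg_cancel,
          Real.rpow_zero, one_mul]

theorem tendsto_sq_mul_rpow_neg {s : ℝ} (hs : 2 < s) :
    Tendsto (fun X : ℝ => X ^ 2 * X ^ (-s)) atTop (𝓝 0) := by
  refine (tendsto_rpow_neg_atTop (sub_pos.2 hs)).congr'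
    ((eventually_gt_atTop 0).mono fun X hX => ?_)
  dsimp only
  rw [← Real.rpow_natCast, ← Real.rpow_add hX]
  congr 1
  push_cast
  ring

theorem ENNReal.mul_add_sSup_sub_le {S : Set ℝ≥0∞} {k a d t l₀ b : ℝ≥0∞} (hl₀ : l₀ ∈ S)
    (ht : t < l₀) (h : ∀ l ∈ S, t < l → k * (a + l) - d ≤ b) : k * (a + sSup S) - d ≤ b := by
  have : Nonempty S := ⟨⟨l₀, hl₀⟩⟩
  rw [sSup_eq_iSup', ENNReal.add_iSup, ENNReal.mul_iSup, ENNReal.iSup_sub]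
  refine iSup_le fun ⟨l, hl⟩ => ?_
  rcases le_total l l₀ with hle | hle
  · exact le_trans (by gcongr) (h l₀ hl₀ ht)
  · exact h l hl (ht.trans_le hle)

namespace Padic

variable {p : ℕ} [Fact p.Prime] {ξ : ℚ_[p]} {x : ℕ → ℤ} {n : ℕ}

theorem one_le_abs_mul_norm_intCast {z : ℤ} (hz : z ≠ 0) : 1 ≤ |(z : ℝ)| * ‖(z : ℚ_[p])‖ := by
  have hdvd : ((p ^ padicValInt p z : ℕ) : ℤ) ∣ z := by exact_mod_cast padicValInt_dvd z
  have hle : ((p ^ padicValInt p z : ℕ) : ℝ) ≤ |(z : ℝ)| := by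
    exact_mod_cast Int.le_of_dvd (abs_pos.2 hz) ((dvd_abs _ _).2 hdvd)
  rw [norm_eq_zpow_neg_valuation (Int.cast_ne_zero.2 hz), valuation_intCast, zpow_neg,
    zpow_natCast, le_mul_inv_iff₀ (by have := (Fact.out : p.Prime).pos; positivity), one_mul]
  exact_mod_cast hle

theorem norm_intCast_eq_one_or_of_isCoprime {a b : ℤ} (h : IsCoprime a b) :
    ‖(a : ℚ_[p])‖ = 1 ∨ ‖(b : ℚ_[p])‖ = 1 := by
  by_contra! hne
  have hdvd : ∀ z : ℤ, ‖(z : ℚ_[p])‖ ≠ 1 → (p : ℤ) ∣ z := fun z hz =>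
    norm_intCast_lt_one_iff.1 ((norm_int_le_one z).lt_of_ne hz)
  exact (Nat.prime_iff_prime_int.1 Fact.out).not_isUnit
    (h.isUnit_of_dvd' (hdvd a hne.1) (hdvd b hne.2))

theorem norm_intCast_succ_sub_mul_le {ε : ℝ} (hε : 0 ≤ ε)
    (herr : ∀ m, 1 ≤ m → m ≤ n → ‖(x 0 : ℚ_[p]) * ξ ^ m - x m‖ ≤ ε) {k : ℕ} (hk : k < n) :
    ‖(x (k + 1) : ℚ_[p]) - ξ * x k‖ ≤ max 1 ‖ξ‖ * ε := by
  have herr' : ‖(x 0 : ℚ_[p]) * ξ ^ k - x k‖ ≤ ε := by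
    rcases k with _ | k
    · simpa using hε
    · exact herr _ (by omega) hk.le
  rw [show (x (k + 1) : ℚ_[p]) - ξ * x k =
      -((x 0 : ℚ_[p]) * ξ ^ (k + 1) - x (k + 1)) + ξ * ((x 0 : ℚ_[p]) * ξ ^ k - x k) by ring,
    max_mul_of_nonneg _ _ hε, one_mul]
  refine (IsUltrametricDist.norm_add_le_max _ _).trans (max_le_max ?_ ?_)
  · rw [norm_neg]
    exact herr _ (by omega) hk
  · rw [norm_mul]
    exact mul_le_mul_of_nonneg_left herr' (norm_nonneg _)

theorem mul_succ_eq_succ_mul_of_norm_le {X δ : ℝ} (hbd : ∀ i ≤ n, |(x i : ℝ)| ≤ X)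
    (hD : ∀ k < n, ‖(x (k + 1) : ℚ_[p]) - ξ * x k‖ ≤ δ) (hsmall : 2 * X ^ 2 * δ < 1)
    {i j : ℕ} (hi : i < n) (hj : j < n) : x i * x (j + 1) = x (i + 1) * x j := by
  by_contra hne
  set N := x i * x (j + 1) - x (i + 1) * x j
  have hX : 0 ≤ X := (abs_nonneg _).trans (hbd 0 (Nat.zero_le _))
  have hnorm_le : ∀ z : ℤ, ∀ k < n, ‖(z : ℚ_[p]) * (x (k + 1) - ξ * x k)‖ ≤ δ := fun z k hk => by
    rw [norm_mul]
    exact (mul_le_of_le_one_left (norm_nonneg _) (norm_int_le_one z)).trans (hD k hk)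
  have hpadic : ‖(N : ℚ_[p])‖ ≤ δ := by
    rw [show (N : ℚ_[p]) = (x i : ℚ_[p]) * (x (j + 1) - ξ * x j)
        + ((-x j : ℤ) : ℚ_[p]) * (x (i + 1) - ξ * x i) by push_cast [N]; ring]
    exact (IsUltrametricDist.norm_add_le_max _ _).trans (max_le (hnorm_le _ j hj) (hnorm_le _ i hi))
  have hreal : |(N : ℝ)| ≤ 2 * X ^ 2 := by
    push_cast [N]
    calc |(x i : ℝ) * x (j + 1) - x (i + 1) * x j|
        ≤ |(x i : ℝ)| * |(x (j + 1) : ℝ)| + |(x (i + 1) : ℝ)| * |(x j : ℝ)| := by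
          rw [← abs_mul, ← abs_mul]; exact abs_sub _ _
      _ ≤ X * X + X * X := by
          gcongr <;> exact hbd _ (by omega)
      _ = 2 * X ^ 2 := by ring
  have := one_le_abs_mul_norm_intCast (p := p) (sub_ne_zero.2 hne)
  nlinarith [abs_nonneg (N : ℝ), norm_nonneg (N : ℚ_[p])]

theorem norm_intCast_mul_norm_sub_le {a b c : ℤ} {δ : ℝ} (hn : n ≠ 0) (hab : IsCoprime a b)
    (hx : ∀ m ≤ n, x m = c * a ^ (n - m) * b ^ m)
    (hD : ∀ k < n, ‖(x (k + 1) : ℚ_[p]) - ξ * x k‖ ≤ δ) :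
    ‖(c : ℚ_[p])‖ * ‖(a : ℚ_[p]) * ξ - b‖ ≤ δ := by
  obtain ⟨k, rfl⟩ := Nat.exists_eq_add_one_of_ne_zero hn
  rcases norm_intCast_eq_one_or_of_isCoprime (p := p) hab with ha | hb
  · calc ‖(c : ℚ_[p])‖ * ‖(a : ℚ_[p]) * ξ - b‖
          = ‖-((c : ℚ_[p]) * a ^ k) * (a * ξ - b)‖ := by
            rw [norm_mul, norm_neg, norm_mul, norm_pow, ha, one_pow, mul_one]
        _ = ‖(x 1 : ℚ_[p]) - ξ * x 0‖ := by
            rw [hx 1 (by omega), hx 0 (by omega)]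
            push_cast
            simp only [pow_zero, pow_one]
            ring_nf
        _ ≤ δ := hD 0 k.succ_pos
  · calc ‖(c : ℚ_[p])‖ * ‖(a : ℚ_[p]) * ξ - b‖
          = ‖-((c : ℚ_[p]) * b ^ k) * (a * ξ - b)‖ := by
            rw [norm_mul, norm_neg, norm_mul, norm_pow, hb, one_pow, mul_one]
        _ = ‖(x (k + 1) : ℚ_[p]) - ξ * x k‖ := by
            rw [hx (k + 1) le_rfl, hx k (by omega)]
            push_cast
            simp only [Nat.sub_self, Nat.add_sub_cancel_left, pow_zero, pow_one]
            ring_nf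
        _ ≤ δ := hD k k.lt_succ_self

theorem exists_int_approx_of_simultaneous {X ε : ℝ} (hbd : ∀ i ≤ n, |(x i : ℝ)| ≤ X)
    (hne : ∃ m, 1 ≤ m ∧ m ≤ n ∧ (x 0 : ℚ_[p]) * ξ ^ m ≠ x m)
    (herr : ∀ m, 1 ≤ m → m ≤ n → ‖(x 0 : ℚ_[p]) * ξ ^ m - x m‖ ≤ ε)
    (hsmall : 2 * max 1 ‖ξ‖ * (X ^ 2 * ε) < 1) :
    ∃ a b c : ℤ, a ≠ 0 ∧ c ≠ 0 ∧ |(c : ℝ)| * |(a : ℝ)| ^ n ≤ X ∧ |(c : ℝ)| * |(b : ℝ)| ^ n ≤ X ∧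
      ‖(a : ℚ_[p]) * ξ - b‖ ≤ max 1 ‖ξ‖ * |(c : ℝ)| * ε := by
  obtain ⟨m₀, hm₀, hm₀n, hm₀ne⟩ := hne
  have hn : n ≠ 0 := by omega
  have hε : 0 ≤ ε := (norm_nonneg _).trans (herr m₀ hm₀ hm₀n)
  have hC : 1 ≤ max 1 ‖ξ‖ := le_max_left _ _
  have hD := fun k (hk : k < n) => norm_intCast_succ_sub_mul_le hε herr hk
  have hx0 : x 0 ≠ 0 := by
    intro h0
    have hxm : x m₀ ≠ 0 := fun hxm => hm₀ne (by simp [h0, hxm])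
    have h1 := one_le_abs_mul_norm_intCast (p := p) hxm
    have h2 : ‖(x m₀ : ℚ_[p])‖ ≤ ε := by simpa [h0] using herr m₀ hm₀ hm₀n
    have h3 : (1 : ℝ) ≤ |(x m₀ : ℝ)| := by exact_mod_cast Int.one_le_abs hxm
    have hX : 1 ≤ X := h3.trans (hbd m₀ hm₀n)
    have hXε : 1 ≤ X * ε := h1.trans (mul_le_mul (hbd m₀ hm₀n) h2 (norm_nonneg _) (by linarith))
    nlinarith [mul_nonneg (mul_nonneg (sub_nonneg.2 hX) (zero_le_one.trans hX)) hε,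
      mul_nonneg (mul_nonneg (sq_nonneg X) hε) (sub_nonneg.2 hC)]
  obtain ⟨a, b, c, hab, hx⟩ := exists_isCoprime_eq_mul_pow_mul_pow hx0 fun m hm =>
    mul_succ_eq_succ_mul_of_norm_le hbd hD (by linarith) (by omega) hm
  have hx0' : x 0 = c * a ^ n := by simpa using hx 0 (Nat.zero_le _)
  have hxn : x n = c * b ^ n := by simpa using hx n le_rfl
  have hc : c ≠ 0 := by rintro rfl; simp [hx0'] at hx0
  have ha : a ≠ 0 := by rintro rfl; simp [hx0', zero_pow hn] at hx0
  refine ⟨a, b, c, ha, hc, ?_, ?_, ?_⟩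
  · simpa [hx0', abs_mul] using hbd 0 (Nat.zero_le _)
  · simpa [hxn, abs_mul] using hbd n le_rfl
  · calc ‖(a : ℚ_[p]) * ξ - b‖ ≤ (|(c : ℝ)| * ‖(c : ℚ_[p])‖) * ‖(a : ℚ_[p]) * ξ - b‖ :=
          le_mul_of_one_le_left (norm_nonneg _) (one_le_abs_mul_norm_intCast hc)
      _ ≤ |(c : ℝ)| * (max 1 ‖ξ‖ * ε) := by
          rw [mul_assoc]
          exact mul_le_mul_of_nonneg_left
            (norm_intCast_mul_norm_sub_le hn hab hx hD) (abs_nonneg _)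
      _ = max 1 ‖ξ‖ * |(c : ℝ)| * ε := by ring

theorem simAt_one_of_norm_le {a b : ℤ} {μ Y : ℝ} (hne : (a : ℚ_[p]) * ξ ≠ b)
    (ha : |(a : ℝ)| ≤ Y) (hb : |(b : ℝ)| ≤ Y) (herr : ‖(a : ℚ_[p]) * ξ - b‖ ≤ Y ^ (-μ - 1)) :
    SimAt p 1 ξ μ Y := by
  refine ⟨fun i => if i = 0 then a else b, fun i hi => ?_, ⟨1, le_rfl, le_rfl, by simpa using hne⟩,
    fun m hm₁ hm₂ => ?_⟩
  · interval_cases i <;> simpa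
  · obtain rfl : m = 1 := le_antisymm hm₂ hm₁
    simpa using herr

theorem frequently_simAt_one (hξ : Transcendental ℚ ξ) {lam μ : ℝ} (hlam : 1 < lam)
    (hμ : μ + 1 < n * (lam + 1)) (h : ∃ᶠ X in atTop, SimAt p n ξ lam X) :
    ∃ᶠ Y in atTop, SimAt p 1 ξ μ Y := by
  set C := max 1 ‖ξ‖
  obtain ⟨H₀, hH₀⟩ :=
    eventually_atTop.1 ((tendsto_rpow_atTop (sub_pos.2 hμ)).eventually_ge_atTop C)
  have hsmall := (tendsto_sq_mul_rpow_neg (by linarith : 2 < lam + 1)).const_mul (2 * C)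
  rw [neg_add', mul_zero] at hsmall
  refine frequently_atTop.2 fun Y₀ => ?_
  set N := ⌈max Y₀ H₀⌉₊
  obtain ⟨ε, hε, hεle⟩ := hξ.exists_pos_le_norm_intCast_mul_sub N
  obtain ⟨X, ⟨x, hbd, hne, herr⟩, hX⟩ :=
    (h.and_eventually (hsmall.eventually (gt_mem_nhds (lt_min one_pos hε)))).exists
  obtain ⟨a, b, c, ha, hc, hca, hcb, happrox⟩ :=
    exists_int_approx_of_simultaneous hbd hne herr (hX.trans_le (min_le_left _ _))
  obtain ⟨H, haH, hbH, hcH⟩ : ∃ H : ℝ, |(a : ℝ)| ≤ H ∧ |(b : ℝ)| ≤ H ∧ |(c : ℝ)| * H ^ n ≤ X := by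
    rcases le_total |(a : ℝ)| |(b : ℝ)| with hab | hab
    exacts [⟨_, hab, le_rfl, hcb⟩, ⟨_, le_rfl, hab, hca⟩]
  have ha1 : (1 : ℝ) ≤ |(a : ℝ)| := by exact_mod_cast Int.one_le_abs ha
  have hc1 : (1 : ℝ) ≤ |(c : ℝ)| := by exact_mod_cast Int.one_le_abs hc
  have hH0 : 0 < H := zero_lt_one.trans_le (ha1.trans haH)
  have hcX : |(c : ℝ)| ≤ X := (le_mul_of_one_le_right (abs_nonneg _) (one_le_pow₀ ha1)).trans hca
  have hNH : (N : ℝ) < H := by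
    by_contra! hHN
    have hc2 : |(c : ℝ)| ≤ 2 * X ^ 2 := by nlinarith
    have hXe : 0 ≤ X ^ (-lam - 1) := Real.rpow_nonneg ((abs_nonneg _).trans hcX) _
    have hlt : ‖(a : ℚ_[p]) * ξ - b‖ < ε :=
      calc ‖(a : ℚ_[p]) * ξ - b‖ ≤ C * |(c : ℝ)| * X ^ (-lam - 1) := happrox
        _ ≤ C * (2 * X ^ 2) * X ^ (-lam - 1) := by gcongr
        _ = 2 * C * (X ^ 2 * X ^ (-lam - 1)) := by ring
        _ < ε := hX.trans_le (min_le_right _ _)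
    exact hlt.not_ge
      (hεle a b ha (by exact_mod_cast haH.trans hHN) (by exact_mod_cast hbH.trans hHN))
  refine ⟨H, (Nat.le_ceil _).trans' (le_max_left _ _) |>.trans hNH.le,
    simAt_one_of_norm_le (hξ.intCast_mul_ne ha b) haH hbH ?_⟩
  calc ‖(a : ℚ_[p]) * ξ - b‖ ≤ C * (|(c : ℝ)| * X ^ (-(lam + 1))) := by
        rw [neg_add', ← mul_assoc]; exact happrox
    _ ≤ C * (H ^ n) ^ (-(lam + 1)) := by
        gcongr
        exact Real.mul_rpow_neg_le_rpow_neg_of_mul_le hc1 (by positivity) hcH (by linarith)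
    _ ≤ H ^ (n * (lam + 1) - (μ + 1)) * H ^ ((n : ℝ) * -(lam + 1)) := by
        rw [← Real.rpow_natCast, ← Real.rpow_mul hH0.le]
        gcongr
        exact hH₀ H ((le_max_right _ _).trans ((Nat.le_ceil _).trans hNH.le))
    _ = H ^ (-μ - 1) := by
        rw [← Real.rpow_add hH0]
        ring_nf

theorem mul_one_add_ofReal_sub_one_le_lambdaExp_one (hξ : Transcendental ℚ ξ) {lam : ℝ}
    (hlam : 1 < lam) (h : ∃ᶠ X in atTop, SimAt p n ξ lam X) :
    (n : ℝ≥0∞) * (1 + ENNReal.ofReal lam) - 1 ≤ lambdaExp p 1 ξ := by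
  refine le_of_forall_lt_imp_le_of_dense fun c hc => ?_
  have hc' : c + 1 < ENNReal.ofReal (n * (lam + 1)) := by
    rw [ENNReal.ofReal_mul n.cast_nonneg, ENNReal.ofReal_natCast,
      ENNReal.ofReal_add (by linarith) zero_le_one, ENNReal.ofReal_one,
      add_comm (ENNReal.ofReal lam)]
    exact lt_tsub_iff_right.1 hc
  have hctop : c ≠ ⊤ := ne_top_of_lt (le_self_add.trans_lt hc')
  rw [← ENNReal.ofReal_toReal hctop, ← ENNReal.ofReal_one,
    ← ENNReal.ofReal_add ENNReal.toReal_nonneg zero_le_one, ENNReal.ofReal_lt_ofReal_iff'] at hc'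
  rw [← ENNReal.ofReal_toReal hctop]
  exact le_sSup ⟨_, rfl, frequently_atTop.1 (frequently_simAt_one hξ hlam hc'.1 h)⟩

end Padic

theorem stmt6_general (p : ℕ) [Fact p.Prime] (n : ℕ) (ξ : ℚ_[p])
    (hξ : Transcendental ℚ ξ) (h : 1 < lambdaExp p n ξ) :
    (n : ℝ≥0∞) * (1 + lambdaExp p n ξ) - 1 ≤ lambdaExp p 1 ξ := by
  obtain ⟨l₀, hl₀, hl₀1⟩ := lt_sSup_iff.1 h
  refine ENNReal.mul_add_sSup_sub_le hl₀ hl₀1 ?_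
  rintro _ ⟨lam, rfl, hlam⟩ h1
  exact Padic.mul_one_add_ofReal_sub_one_le_lambdaExp_one hξ (ENNReal.one_lt_ofReal.1 h1)
    (frequently_atTop.2 hlam)

/-- If `λ_n(ξ) > 1` for a transcendental `ξ`, then `λ_1(ξ) ≥ n(1 + λ_n(ξ)) − 1`. -/
theorem stmt6 (p : ℕ) [Fact p.Prime] (n : ℕ) (hn : 2 ≤ n) (ξ : ℚ_[p])
    (hξ : Transcendental ℚ ξ) (h : 1 < lambdaExp p n ξ) :
    (n : ℝ≥0∞) * (1 + lambdaExp p n ξ) - 1 ≤ lambdaExp p 1 ξ :=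
  stmt6_general p n ξ hξ h
end

section
/- Let p be prime, ξ ∈ ℚ_p, and n ≥ 1. Then λ̂_n(ξ) ≤ 1/w_{n,n+1}(ξ), where w_{n,n+1}(ξ) is the supremum of w for which, for arbitrarily large H, the system 0 < |a_0 + a_1 ξ + … + a_n ξ^n|_p ≤ H^{−w−1}, max_i|a_i| ≤ H admits n+1 linearly independent integer-vector solutions (a_0, …, a_n). -/
open scoped ENNReal

/-- The uniform exponent `λ̂_n(ξ)`. -/
noncomputable def lambdaHatExp (p : ℕ) [Fact p.Prime] (n : ℕ) (ξ : ℚ_[p]) : ℝ≥0∞ :=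
  sSup {l : ℝ≥0∞ | ∃ lam : ℝ, l = ENNReal.ofReal lam ∧ ∃ X₀ : ℝ, ∀ X, X₀ ≤ X → SimAt p n ξ lam X}


def PolyAtMulti (p : ℕ) [Fact p.Prime] (N ℓ : ℕ) (ξ : ℚ_[p]) (w H : ℝ) : Prop :=
  ∃ a : Fin ℓ → Fin (N + 1) → ℤ,
    LinearIndependent ℚ (fun j => fun i => (a j i : ℚ)) ∧
    ∀ j, (∀ i, (|a j i| : ℝ) ≤ H) ∧
      (∑ i, (a j i : ℚ_[p]) * ξ ^ (i : ℕ)) ≠ 0 ∧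
      ‖∑ i, (a j i : ℚ_[p]) * ξ ^ (i : ℕ)‖ ≤ H ^ (-w - 1)

/-- The exponent `w_{N,ℓ}(ξ)`: best `w` achieved, for arbitrarily large heights `H`, by `ℓ`
linearly independent integer solutions of the polynomial approximation system. -/
noncomputable def wMultiExp (p : ℕ) [Fact p.Prime] (N ℓ : ℕ) (ξ : ℚ_[p]) : ℝ≥0∞ :=
  sSup {l : ℝ≥0∞ | ∃ w : ℝ, l = ENNReal.ofReal w ∧ ∀ H₀ : ℝ, ∃ H, H₀ ≤ H ∧ PolyAtMulti p N ℓ ξ w H}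


open Filter in
lemma int_norm_mul_abs_ge (p : ℕ) [hp : Fact p.Prime] (N : ℤ) (hN : N ≠ 0) :
    (1:ℝ) ≤ ‖(N : ℚ_[p])‖ * |(N:ℝ)| := by
  have hp1 : (1:ℝ) < p := by exact_mod_cast hp.out.one_lt
  have hNne : ((N : ℚ_[p])) ≠ 0 := by exact_mod_cast hN
  have h1 : ‖(N : ℚ_[p])‖ ≤ 1 := Padic.norm_int_le_one N
  have hval : ‖(N:ℚ_[p])‖ = (p:ℝ) ^ (-(N:ℚ_[p]).valuation) := Padic.norm_eq_zpow_neg_valuation hNne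
  have hv0 : 0 ≤ (N:ℚ_[p]).valuation := by
    by_contra h
    push_neg at h
    have h2 : (1:ℝ) < (p:ℝ) ^ (-(N:ℚ_[p]).valuation) := one_lt_zpow₀ hp1 (by omega)
    rw [← hval] at h2; linarith
  set k := ((N:ℚ_[p]).valuation).toNat with hk
  have hknorm : ‖(N:ℚ_[p])‖ = (p:ℝ) ^ (-(k:ℤ)) := by rw [hval]; congr 1; omega
  have hdvd : ((p:ℤ) ^ k) ∣ N := by
    exact_mod_cast (Padic.norm_int_le_pow_iff_dvd N k).1 (le_of_eq hknorm)
  have hle : ((p:ℤ))^k ≤ |N| := Int.le_of_dvd (abs_pos.2 hN) ((dvd_abs _ _).2 hdvd)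
  have hleR : ((p:ℝ))^k ≤ |(N:ℝ)| := by
    rw [← Int.cast_abs]; exact_mod_cast hle
  have hppos : (0:ℝ) < (p:ℝ)^k := by positivity
  calc (1:ℝ) = (p:ℝ)^(-(k:ℤ)) * (p:ℝ)^k := by
        rw [zpow_neg, zpow_natCast]; field_simp
    _ ≤ ‖(N:ℚ_[p])‖ * |(N:ℝ)| := by
        rw [hknorm]
        exact mul_le_mul le_rfl hleR hppos.le (by positivity)

lemma dot_zero_of_indep {n : ℕ} (a : Fin (n+1) → Fin (n+1) → ℤ)
    (hli : LinearIndependent ℚ (fun j => fun i => (a j i : ℚ)))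
    (v : Fin (n+1) → ℤ) (hv : ∀ j, ∑ i, a j i * v i = 0) : ∀ i, v i = 0 := by
  classical
  let φ : (Fin (n+1) → ℚ) →ₗ[ℚ] ℚ :=
    { toFun := fun u => ∑ i, u i * (v i : ℚ)
      map_add' := by intro u w; simp [add_mul, Finset.sum_add_distrib]
      map_smul' := by intro c u; simp [Finset.mul_sum, mul_assoc] }
  have hcard : Fintype.card (Fin (n+1)) = Module.finrank ℚ (Fin (n+1) → ℚ) := by simp
  let b := basisOfLinearIndependentOfCardEqFinrank hli hcard
  have hb : ⇑b = fun j => fun i => (a j i : ℚ) :=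
    coe_basisOfLinearIndependentOfCardEqFinrank _ _
  have hφ : φ = 0 := by
    apply b.ext
    intro j
    have h0 : ∑ i, (a j i : ℚ) * (v i : ℚ) = 0 := by
      have := hv j; exact_mod_cast congrArg (fun z : ℤ => (z : ℚ)) this
    simp only [hb, LinearMap.zero_apply]
    simpa [φ] using h0
  intro i
  have h1 : φ (Pi.single i 1) = 0 := by rw [hφ]; rfl
  have h2 : (v i : ℚ) = 0 := by
    simpa [φ, Pi.single_apply, Finset.sum_ite_eq'] using h1
  exact_mod_cast h2

open Filter in
lemma key_mul_le_one (p : ℕ) [Fact p.Prime] (ξ : ℚ_[p]) (n : ℕ) (hn : 1 ≤ n)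
    (lam w : ℝ) (hlam : 0 < lam) (hw : 0 < w)
    (X₀ : ℝ) (hSim : ∀ X, X₀ ≤ X → SimAt p n ξ lam X)
    (hPoly : ∀ H₀ : ℝ, ∃ H, H₀ ≤ H ∧ PolyAtMulti p n (n+1) ξ w H) :
    w * lam ≤ 1 := by
  by_contra hcon
  push_neg at hcon
  set c : ℝ := 2 * (n+1) with hc
  have hcpos : (0:ℝ) < c := by positivity
  set K : ℝ := 2 * (n+1)^2 * c ^ lam with hK
  have hKpos : 0 < K := by
    have : (0:ℝ) < c ^ lam := Real.rpow_pos_of_pos hcpos lam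
    positivity
  -- eventual conditions
  have E2 : ∀ᶠ H : ℝ in atTop, max X₀ 1 ≤ H ^ w / c := by
    filter_upwards [(tendsto_rpow_atTop hw).eventually_ge_atTop (c * max X₀ 1)]
      with H h
    rw [le_div_iff₀ hcpos]
    linarith [h, mul_comm c (max X₀ 1)]
  have E3 : ∀ᶠ H : ℝ in atTop, K * H < H ^ (w * lam) := by
    filter_upwards [(tendsto_rpow_atTop (by nlinarith : (0:ℝ) < w * lam - 1)).eventually_gt_atTop K,
      eventually_gt_atTop (0:ℝ)] with H h hH
    have hsplit : H ^ (w * lam) = H ^ (w * lam - 1) * H := by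
      rw [show H ^ (w * lam) = H ^ ((w * lam - 1) + 1) by congr 1; ring,
        Real.rpow_add hH, Real.rpow_one]
    rw [hsplit]
    exact mul_lt_mul_of_pos_right h hH
  obtain ⟨B, hB⟩ := eventually_atTop.1 (E2.and (E3.and (eventually_gt_atTop (1:ℝ))))
  obtain ⟨H, hHB, a, hli, ha⟩ := hPoly B
  obtain ⟨hE2, hE3, hH1⟩ := hB H hHB
  have hHpos : (0:ℝ) < H := by linarith
  set X : ℝ := H ^ w / c with hX
  have hXpos : (0:ℝ) < X := by
    have := Real.rpow_pos_of_pos hHpos w; positivity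
  have hX1 : (1:ℝ) ≤ X := le_trans (le_max_right _ _) hE2
  obtain ⟨x, hxb, ⟨m₀, hm₀1, hm₀n, hm₀ne⟩, hxapp⟩ :=
    hSim X (le_trans (le_max_left _ _) hE2)
  -- the integers N j
  set N : Fin (n+1) → ℤ := fun j => ∑ i, a j i * x (i : ℕ) with hNdef
  -- p-adic size
  have hHw1 : H ^ (-w-1) = (H ^ w * H)⁻¹ := by
    rw [show -w-1 = -(w+1) by ring, Real.rpow_neg hHpos.le, Real.rpow_add hHpos,
      Real.rpow_one]
  have hXl1 : X ^ (-lam-1) = (X ^ lam * X)⁻¹ := by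
    rw [show -lam-1 = -(lam+1) by ring, Real.rpow_neg hXpos.le, Real.rpow_add hXpos,
      Real.rpow_one]
  have hXlampos : 0 < X ^ lam := Real.rpow_pos_of_pos hXpos lam
  have hHwpos : 0 < H ^ w := Real.rpow_pos_of_pos hHpos w
  have hXlnn : 0 ≤ X ^ (-lam-1) := by rw [hXl1]; positivity
  have claim1 : ∀ j, ‖(N j : ℚ_[p])‖ ≤ H ^ (-w-1) + (n+1) * X ^ (-lam-1) := by
    intro j
    have hNeq : (N j : ℚ_[p]) = (x 0 : ℚ_[p]) * (∑ i, (a j i : ℚ_[p]) * ξ ^ (i:ℕ))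
        - ∑ i : Fin (n+1), (a j i : ℚ_[p]) * ((x 0 : ℚ_[p]) * ξ ^ (i:ℕ) - (x (i:ℕ) : ℚ_[p])) := by
      push_cast [hNdef]
      rw [Finset.mul_sum, ← Finset.sum_sub_distrib]
      exact Finset.sum_congr rfl fun i _ => by ring
    rw [hNeq]
    have h1 : ‖(x 0 : ℚ_[p]) * (∑ i, (a j i : ℚ_[p]) * ξ ^ (i:ℕ))‖ ≤ H ^ (-w-1) := by
      rw [norm_mul]
      calc ‖((x 0 : ℤ) : ℚ_[p])‖ * ‖∑ i, (a j i : ℚ_[p]) * ξ ^ (i:ℕ)‖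
          ≤ 1 * (H ^ (-w-1)) := by
            apply mul_le_mul (Padic.norm_int_le_one _) (ha j).2.2 (norm_nonneg _)
            exact zero_le_one
        _ = H ^ (-w-1) := one_mul _
    have h2 : ‖∑ i : Fin (n+1), (a j i : ℚ_[p]) * ((x 0 : ℚ_[p]) * ξ ^ (i:ℕ) - (x (i:ℕ) : ℚ_[p]))‖
        ≤ (n+1) * X ^ (-lam-1) := by
      calc ‖∑ i : Fin (n+1), (a j i : ℚ_[p]) * ((x 0 : ℚ_[p]) * ξ ^ (i:ℕ) - (x (i:ℕ) : ℚ_[p]))‖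
          ≤ ∑ i : Fin (n+1), ‖(a j i : ℚ_[p]) * ((x 0 : ℚ_[p]) * ξ ^ (i:ℕ) - (x (i:ℕ) : ℚ_[p]))‖ :=
            norm_sum_le _ _
        _ ≤ ∑ _i : Fin (n+1), X ^ (-lam-1) := by
            apply Finset.sum_le_sum
            intro i _
            rw [norm_mul]
            rcases Nat.eq_zero_or_pos (i : ℕ) with h0 | hpos
            · rw [h0]
              simp only [pow_zero, mul_one, sub_self]
              simp [hXlnn]
            · calc ‖((a j i : ℤ) : ℚ_[p])‖ * ‖(x 0 : ℚ_[p]) * ξ ^ (i:ℕ) - (x (i:ℕ) : ℚ_[p])‖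
                  ≤ 1 * (X ^ (-lam-1)) := by
                    apply mul_le_mul (Padic.norm_int_le_one _)
                      (hxapp (i:ℕ) hpos (Nat.lt_succ_iff.1 i.isLt)) (norm_nonneg _) zero_le_one
                _ = X ^ (-lam-1) := one_mul _
        _ = (n+1) * X ^ (-lam-1) := by
            rw [Finset.sum_const, Finset.card_univ, Fintype.card_fin, nsmul_eq_mul]
            push_cast; ring
    calc ‖_ - _‖ ≤ ‖(x 0 : ℚ_[p]) * (∑ i, (a j i : ℚ_[p]) * ξ ^ (i:ℕ))‖ +
          ‖∑ i : Fin (n+1), (a j i : ℚ_[p]) * ((x 0 : ℚ_[p]) * ξ ^ (i:ℕ) - (x (i:ℕ) : ℚ_[p]))‖ :=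
        norm_sub_le _ _
      _ ≤ H ^ (-w-1) + (n+1) * X ^ (-lam-1) := add_le_add h1 h2
  have claim2 : ∀ j, |(N j : ℝ)| ≤ (n+1) * (H * X) := by
    intro j
    have : ((N j : ℤ) : ℝ) = ∑ i : Fin (n+1), (a j i : ℝ) * (x (i:ℕ) : ℝ) := by
      push_cast [hNdef]; rfl
    rw [this]
    calc |∑ i : Fin (n+1), (a j i : ℝ) * (x (i:ℕ) : ℝ)|
        ≤ ∑ i : Fin (n+1), |(a j i : ℝ) * (x (i:ℕ) : ℝ)| := Finset.abs_sum_le_sum_abs _ _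
      _ ≤ ∑ _i : Fin (n+1), H * X := by
          apply Finset.sum_le_sum
          intro i _
          rw [abs_mul]
          apply mul_le_mul ((ha j).1 i) (hxb (i:ℕ) (Nat.lt_succ_iff.1 i.isLt))
            (abs_nonneg _) (le_trans (abs_nonneg _) ((ha j).1 i))
      _ = (n+1) * (H * X) := by
          rw [Finset.sum_const, Finset.card_univ, Fintype.card_fin, nsmul_eq_mul]
          push_cast; ring
  -- key numeric estimate
  have hS1 : ((n:ℝ)+1) * (H * X) * (H ^ (-w-1)) = 1/2 := by
    rw [hHw1, hX]
    field_simp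
    ring
  have hS2 : ((n:ℝ)+1) * (H * X) * ((n+1) * X ^ (-lam-1)) < 1/2 := by
    rw [hXl1]
    have hXlam : X ^ lam = H ^ (w * lam) / c ^ lam := by
      rw [hX, Real.div_rpow hHwpos.le hcpos.le, ← Real.rpow_mul hHpos.le]
    have hclampos : (0:ℝ) < c ^ lam := Real.rpow_pos_of_pos hcpos lam
    have hXlamgt : 2 * ((n:ℝ)+1)^2 * H < X ^ lam := by
      rw [hXlam, lt_div_iff₀ hclampos]
      calc 2 * ((n:ℝ)+1)^2 * H * c ^ lam = K * H := by rw [hK]; ring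
        _ < H ^ (w * lam) := hE3
    have lhs_eq : ((n:ℝ)+1) * (H * X) * (((n:ℝ)+1) * (X ^ lam * X)⁻¹) =
        (((n:ℝ)+1)^2 * H) / X ^ lam := by
      field_simp
    rw [lhs_eq, div_lt_iff₀ hXlampos]
    nlinarith [hXlamgt]
  have claim3 : ∀ j, N j = 0 := by
    intro j
    by_contra hNj
    have := int_norm_mul_abs_ge p (N j) hNj
    have hb1 := claim1 j
    have hb2 := claim2 j
    have hnn : (0:ℝ) ≤ ‖(N j : ℚ_[p])‖ := norm_nonneg _
    have habs : (0:ℝ) ≤ |(N j : ℝ)| := abs_nonneg _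
    have hprod : ‖(N j : ℚ_[p])‖ * |(N j : ℝ)| ≤
        (H ^ (-w-1) + (n+1) * X ^ (-lam-1)) * ((n+1) * (H * X)) :=
      mul_le_mul hb1 hb2 habs (by positivity)
    have : (H ^ (-w-1) + ((n:ℝ)+1) * X ^ (-lam-1)) * ((n+1) * (H * X)) < 1 := by
      have expand : (H ^ (-w-1) + ((n:ℝ)+1) * X ^ (-lam-1)) * ((n+1) * (H * X)) =
          ((n:ℝ)+1) * (H * X) * (H ^ (-w-1)) + ((n:ℝ)+1) * (H * X) * ((n+1) * X ^ (-lam-1)) := by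
        ring
      rw [expand, hS1]
      linarith [hS2]
    linarith
  -- contradiction with nonvanishing
  have hx0 : ∀ i : Fin (n+1), x (i : ℕ) = 0 :=
    dot_zero_of_indep a hli (fun i => x (i : ℕ)) claim3
  have hx00 : x 0 = 0 := hx0 0
  have hxm : x m₀ = 0 := by
    have := hx0 ⟨m₀, by omega⟩
    simpa using this
  apply hm₀ne
  rw [hx00, hxm]
  push_cast
  ring

/-- `λ̂_n(ξ) ≤ 1/w_{n,n+1}(ξ)` (with `1/∞ = 0`). -/
theorem stmt15 (p : ℕ) [Fact p.Prime] (ξ : ℚ_[p]) (n : ℕ) (hn : 1 ≤ n) :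
    lambdaHatExp p n ξ ≤ 1 / wMultiExp p n (n + 1) ξ := by
  rw [lambdaHatExp]
  apply sSup_le
  rintro l ⟨lam, rfl, X₀, hlam⟩
  rw [ENNReal.le_div_iff_mul_le (Or.inr one_ne_zero) (Or.inr ENNReal.one_ne_top),
    mul_comm, ← ENNReal.le_div_iff_mul_le (Or.inr one_ne_zero) (Or.inr ENNReal.one_ne_top),
    wMultiExp]
  apply sSup_le
  rintro l ⟨w, rfl, hw⟩
  rw [ENNReal.le_div_iff_mul_le (Or.inr one_ne_zero) (Or.inr ENNReal.one_ne_top)]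
  rcases le_or_gt lam 0 with h | hlam0
  · rw [ENNReal.ofReal_eq_zero.2 h, mul_zero]; exact zero_le_one
  rcases le_or_gt w 0 with h | hw0
  · rw [ENNReal.ofReal_eq_zero.2 h, zero_mul]; exact zero_le_one
  have key : w * lam ≤ 1 := key_mul_le_one p ξ n hn lam w hlam0 hw0 X₀ hlam hw
  calc ENNReal.ofReal w * ENNReal.ofReal lam = ENNReal.ofReal (w * lam) :=
        (ENNReal.ofReal_mul hw0.le).symm
    _ ≤ 1 := ENNReal.ofReal_le_one.2 key
end

section
/- Let p be prime, ξ ∈ ℚ_p, n ≥ 1, and λ > 0. Suppose an integer tuple (p_0, p_1, …, p_n) with p_i ≠ 0 and |p_i|_p ≥ c > 0 for all i satisfies |p_{i−1}p_{i+1} − p_i²|_p ≤ ε for i = 1, …, n−1. Then the p-adic number ξ₀ := p_1/p_0 satisfies |p_0 ξ₀^i − p_i|_p ≤ c^{−n} ε · max(1, |ξ₀|_p)^n for i = 1, …, n. -/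
/-!
Put `D_k = p_{k+1} p_1 − p_0 p_{k+2}` and `E_k = p_0 ξ₀^k − p_k`. The identities
`p_{k+1} D_{k+1} = p_{k+2} D_k − p_0 Δ_{2,k+2}` and `E_{k+2} = E_{k+1} ξ₀ + D_k / p_0`, together
with the ultrametric inequality, `|p_i|_p ≤ 1` and `|p_i|_p ≥ c`, give by induction
`c^k |D_k|_p ≤ ε` and then `c^k |E_{k+1}|_p ≤ ε max(1, |ξ₀|_p)^k`.
-/

lemma IsUltrametricDist.norm_sub_le_max {E : Type*} [SeminormedAddGroup E] [IsUltrametricDist E]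
    (x y : E) : ‖x - y‖ ≤ max ‖x‖ ‖y‖ := by
  simpa [sub_eq_add_neg] using norm_add_le_max x (-y)

lemma veronese_defect_succ_succ {K : Type*} [Field K] (a : ℕ → K) (h0 : a 0 ≠ 0) (k : ℕ) :
    a 0 * (a 1 / a 0) ^ (k + 2) - a (k + 2) =
      (a 0 * (a 1 / a 0) ^ (k + 1) - a (k + 1)) * (a 1 / a 0) +
        (a (k + 1) * a 1 - a 0 * a (k + 2)) / a 0 := by
  rw [pow_succ _ (k + 1)]
  field_simp
  ring

section Hankel

variable {K : Type*} [NormedField K] [IsUltrametricDist K] {a : ℕ → K} {n : ℕ} {c ε : ℝ}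

lemma pow_mul_norm_hankel_cross_le (hle : ∀ i ≤ n, ‖a i‖ ≤ 1) (hlow : ∀ i ≤ n, c ≤ ‖a i‖)
    (hc : 0 ≤ c) (hΔ : ∀ i, i + 2 ≤ n → ‖a i * a (i + 2) - a (i + 1) ^ 2‖ ≤ ε) :
    ∀ k, k + 2 ≤ n → c ^ k * ‖a (k + 1) * a 1 - a 0 * a (k + 2)‖ ≤ ε := by
  have hc1 : c ≤ 1 := (hlow 0 n.zero_le).trans (hle 0 n.zero_le)
  intro k
  induction k with
  | zero =>
    intro hn
    rw [pow_zero, one_mul, norm_sub_rev]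
    simpa [sq] using hΔ 0 hn
  | succ k ih =>
    intro hn
    set D := a (k + 2) * a 1 - a 0 * a (k + 3)
    have hrec : a (k + 1) * D = a (k + 2) * (a (k + 1) * a 1 - a 0 * a (k + 2)) -
        a 0 * (a (k + 1) * a (k + 3) - a (k + 2) ^ 2) := by ring
    have hD := ih (by omega)
    have hΔk := hΔ (k + 1) hn
    have hck : c ^ k ≤ 1 := pow_le_one₀ hc hc1
    calc c ^ (k + 1) * ‖D‖ ≤ c ^ k * ‖a (k + 1) * D‖ := by
          rw [pow_succ, mul_assoc, norm_mul]
          gcongr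
          exact hlow _ (by omega)
      _ ≤ c ^ k * max ‖a (k + 2) * (a (k + 1) * a 1 - a 0 * a (k + 2))‖
            ‖a 0 * (a (k + 1) * a (k + 3) - a (k + 2) ^ 2)‖ := by
          rw [hrec]
          gcongr
          exact IsUltrametricDist.norm_sub_le_max _ _
      _ ≤ ε := by
          rw [mul_max_of_nonneg _ _ (pow_nonneg hc k), norm_mul, norm_mul]
          refine max_le ?_ ?_
          · calc _ ≤ c ^ k * (1 * ‖a (k + 1) * a 1 - a 0 * a (k + 2)‖) := by
                  gcongr
                  exact hle _ (by omega)
              _ ≤ ε := by rwa [one_mul]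
          · calc _ ≤ 1 * (1 * ‖a (k + 1) * a (k + 3) - a (k + 2) ^ 2‖) := by
                  gcongr
                  exact hle 0 n.zero_le
              _ ≤ ε := by rwa [one_mul, one_mul]

lemma pow_mul_norm_veronese_defect_le (hle : ∀ i ≤ n, ‖a i‖ ≤ 1) (hlow : ∀ i ≤ n, c ≤ ‖a i‖)
    (hc : 0 < c) (hε : 0 ≤ ε)
    (hΔ : ∀ i, i + 2 ≤ n → ‖a i * a (i + 2) - a (i + 1) ^ 2‖ ≤ ε) :
    ∀ k, k + 1 ≤ n → c ^ k * ‖a 0 * (a 1 / a 0) ^ (k + 1) - a (k + 1)‖ ≤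
      ε * max 1 ‖a 1 / a 0‖ ^ k := by
  have hc1 : c ≤ 1 := (hlow 0 n.zero_le).trans (hle 0 n.zero_le)
  have ha0 : c ≤ ‖a 0‖ := hlow 0 n.zero_le
  have h0 : a 0 ≠ 0 := norm_pos_iff.mp (hc.trans_le ha0)
  set x := a 1 / a 0
  set M := max 1 ‖x‖
  have hM1 : 1 ≤ M := le_max_left _ _
  intro k
  induction k with
  | zero =>
    intro _
    simp [x, mul_div_cancel₀ _ h0, hε]
  | succ k ih =>
    intro hn
    have hE := ih (by omega)
    have hD := pow_mul_norm_hankel_cross_le hle hlow hc.le hΔ k hn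
    rw [veronese_defect_succ_succ a h0]
    refine (mul_le_mul_of_nonneg_left (IsUltrametricDist.norm_add_le_max _ _)
      (pow_nonneg hc.le _)).trans ?_
    rw [mul_max_of_nonneg _ _ (pow_nonneg hc.le _), norm_mul]
    refine max_le ?_ ?_
    · calc c ^ (k + 1) * (‖a 0 * x ^ (k + 1) - a (k + 1)‖ * ‖x‖)
            = c * (c ^ k * ‖a 0 * x ^ (k + 1) - a (k + 1)‖) * ‖x‖ := by ring
        _ ≤ 1 * (ε * M ^ k) * M := by
          gcongr
          exact le_max_right _ _
        _ = ε * M ^ (k + 1) := by ring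
    · rw [norm_div]
      calc c ^ (k + 1) * (‖a (k + 1) * a 1 - a 0 * a (k + 2)‖ / ‖a 0‖)
            = c ^ k * ‖a (k + 1) * a 1 - a 0 * a (k + 2)‖ * (c / ‖a 0‖) := by ring
        _ ≤ ε * 1 := by
          gcongr
          exact div_le_one_of_le₀ ha0 (norm_nonneg _)
        _ ≤ ε * M ^ (k + 1) := by
          gcongr
          exact one_le_pow₀ hM1

end Hankel

theorem stmt18_general (p : ℕ) [Fact p.Prime] (n : ℕ) (P : ℕ → ℤ) (c ε : ℝ) (hc : 0 < c) (hε : 0 < ε)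
    (hPlow : ∀ i ≤ n, c ≤ ‖((P i : ℤ) : ℚ_[p])‖)
    (h : ∀ i, 1 ≤ i → i ≤ n - 1 →
      ‖((P (i - 1) * P (i + 1) - (P i) ^ 2 : ℤ) : ℚ_[p])‖ ≤ ε) :
    ∀ i, 1 ≤ i → i ≤ n →
      ‖(P 0 : ℚ_[p]) * ((P 1 : ℚ_[p]) / (P 0 : ℚ_[p])) ^ i - (P i : ℚ_[p])‖ ≤
        c ^ (-(n : ℤ)) * ε * max 1 ‖(P 1 : ℚ_[p]) / (P 0 : ℚ_[p])‖ ^ n := by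
  intro i hi hin
  obtain ⟨k, rfl⟩ : ∃ k, i = k + 1 := ⟨i - 1, by omega⟩
  have hΔ : ∀ j, j + 2 ≤ n →
      ‖(P j : ℚ_[p]) * P (j + 2) - (P (j + 1) : ℚ_[p]) ^ 2‖ ≤ ε := fun j hj => by
    simpa using h (j + 1) (by omega) (by omega)
  have hE := pow_mul_norm_veronese_defect_le (a := fun i => (P i : ℚ_[p]))
    (fun i _ => Padic.norm_int_le_one _) hPlow hc hε.le hΔ k hin
  have hc1 : c ≤ 1 := (hPlow 0 n.zero_le).trans (Padic.norm_int_le_one _)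
  rw [zpow_neg, zpow_natCast, mul_assoc, le_inv_mul_iff₀ (pow_pos hc n)]
  calc c ^ n * _ ≤ c ^ k * _ :=
        mul_le_mul_of_nonneg_right (pow_le_pow_of_le_one hc.le hc1 (by omega)) (norm_nonneg _)
    _ ≤ _ := hE
    _ ≤ _ := by
        gcongr
        · exact le_max_left _ _
        · omega

/-- Converse characterization: if the Hankel minors `p_{i−1} p_{i+1} − p_i²` are `p`-adically
small and the `|p_i|_p` are bounded below by `c`, then the tuple approximates the Veronese
point attached to `ξ₀ = p_1/p_0`. -/
theorem stmt18 (p : ℕ) [Fact p.Prime] (ξ : ℚ_[p]) (n : ℕ) (hn : 1 ≤ n)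
    (lam : ℝ) (hlam : 0 < lam) (P : ℕ → ℤ) (c ε : ℝ) (hc : 0 < c) (hε : 0 < ε)
    (hPne : ∀ i ≤ n, P i ≠ 0) (hPlow : ∀ i ≤ n, c ≤ ‖((P i : ℤ) : ℚ_[p])‖)
    (h : ∀ i, 1 ≤ i → i ≤ n - 1 →
      ‖((P (i - 1) * P (i + 1) - (P i) ^ 2 : ℤ) : ℚ_[p])‖ ≤ ε) :
    ∀ i, 1 ≤ i → i ≤ n →
      ‖(P 0 : ℚ_[p]) * ((P 1 : ℚ_[p]) / (P 0 : ℚ_[p])) ^ i - (P i : ℚ_[p])‖ ≤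
        c ^ (-(n : ℤ)) * ε * max 1 ‖(P 1 : ℚ_[p]) / (P 0 : ℚ_[p])‖ ^ n :=
  stmt18_general p n P c ε hc hε hPlow h
end

section
/- Let p be prime, ξ ∈ ℚ_p, n ≥ 1, and suppose integers p_0, …, p_n satisfy |p_i ξ − p_{i+1}|_p ≤ ε for i = 0, …, n−1, with max_i |p_i| ≤ Q (ordinary absolute value) and ε ∈ (0,1). Then for any positive integers m, k with k − m + 1 ≥ 0 and k + m − 1 ≤ n, the determinant of the m×m Hankel matrix Δ_{m,k} = (p_{k−m+i+j−1})_{1≤i,j≤m} satisfies |det Δ_{m,k}|_p ≤ C(ξ, n) · ε^{m−1}, where C(ξ,n) depends only on ξ and n. -/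
open Matrix Finset Equiv

lemma det_bound_aux (p : ℕ) [Fact p.Prime] {m : ℕ} (M : Matrix (Fin (m+1)) (Fin (m+1)) ℚ_[p])
    (ε : ℝ) (hε : 0 ≤ ε) (h0 : ∀ i, ‖M i 0‖ ≤ 1) (h : ∀ (i j : Fin (m+1)), (j : ℕ) ≠ 0 → ‖M i j‖ ≤ ε) :
    ‖M.det‖ ≤ (m+1).factorial * ε ^ m := by
  rw [Matrix.det_apply']
  calc ‖∑ σ : Perm (Fin (m+1)), Equiv.Perm.sign σ * ∏ i, M (σ i) i‖
      ≤ ∑ σ : Perm (Fin (m+1)), ‖(Equiv.Perm.sign σ : ℚ_[p]) * ∏ i, M (σ i) i‖ :=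
        norm_sum_le _ _
    _ ≤ ∑ _σ : Perm (Fin (m+1)), ε ^ m := by
        refine Finset.sum_le_sum fun σ _ => ?_
        have hsign : ‖((Equiv.Perm.sign σ : ℤ) : ℚ_[p])‖ = 1 := by
          rcases Int.units_eq_one_or σ.sign with hs | hs <;> simp [hs]
        rw [norm_mul, hsign, one_mul, norm_prod]
        calc (∏ i, ‖M (σ i) i‖) ≤ ∏ i : Fin (m+1), (if i = 0 then (1:ℝ) else ε) := by
              refine Finset.prod_le_prod (fun i _ => norm_nonneg _) fun i _ => ?_
              by_cases hi : i = 0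
              · subst hi; simpa using h0 (σ 0)
              · rw [if_neg hi]
                exact h (σ i) i (fun hc => hi (Fin.ext hc))
          _ = ε ^ m := by
              rw [Fin.prod_univ_succ]
              simp [Fin.succ_ne_zero]
    _ = (m+1).factorial * ε ^ m := by
        rw [Finset.sum_const, Finset.card_univ, Fintype.card_perm, Fintype.card_fin,
          nsmul_eq_mul]

/-- Hankel determinant bound: there is a constant `C = C(ξ, n)` such that whenever the tuple
`p_0, …, p_n` satisfies `|p_i ξ − p_{i+1}|_p ≤ ε`, every `m × m` Hankel determinant
`det Δ_{m,k}` (with entries `p_{k−m+i+j−1}`) is `p`-adically at most `C ε^{m−1}`. -/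
theorem stmt19 (p : ℕ) [Fact p.Prime] (ξ : ℚ_[p]) (n : ℕ) (hn : 1 ≤ n) :
    ∃ C : ℝ, 0 < C ∧
      ∀ (P : ℕ → ℤ) (ε Q : ℝ), 0 < ε → ε < 1 →
        (∀ i ≤ n, (|P i| : ℝ) ≤ Q) →
        (∀ i < n, ‖(P i : ℚ_[p]) * ξ - (P (i + 1) : ℚ_[p])‖ ≤ ε) →
        ∀ m k : ℕ, 1 ≤ m → m ≤ k + 1 → k + m - 1 ≤ n →
          ‖(Matrix.of fun i j : Fin m =>
              ((P (k + 1 - m + (i : ℕ) + (j : ℕ)) : ℚ_[p]))).det‖ ≤ C * ε ^ (m - 1) := by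
  refine ⟨(n+1).factorial, by positivity, ?_⟩
  intro P ε Q hε hε1 hQ hrel m k hm hmk hkm
  obtain ⟨m', rfl⟩ : ∃ m', m = m' + 1 := ⟨m - 1, by omega⟩
  set A : Matrix (Fin (m'+1)) (Fin (m'+1)) ℚ_[p] :=
    Matrix.of fun i j => ((P (k + 1 - (m'+1) + (i : ℕ) + (j : ℕ)) : ℤ) : ℚ_[p]) with hA
  set U : Matrix (Fin (m'+1)) (Fin (m'+1)) ℚ_[p] :=
    Matrix.of (fun l j => if l = j then 1 else if (l:ℕ)+1 = (j:ℕ) then -ξ else 0) with hU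
  have hUtri : U.BlockTriangular id := by
    intro i j hij
    simp only [hU, Matrix.of_apply]
    have h1 : (j : ℕ) < (i : ℕ) := hij
    rw [if_neg (by omega ∘ Fin.val_eq_of_eq), if_neg (by omega)]
  have hdetU : U.det = 1 := by
    rw [Matrix.det_of_upperTriangular hUtri]
    simp [hU]
  have hdet : A.det = (A * U).det := by rw [Matrix.det_mul, hdetU, mul_one]
  -- entry formula
  have hmul : ∀ i j : Fin (m'+1), (A * U) i j =
      A i j + ∑ l, A i l * (if (l:ℕ)+1 = (j:ℕ) then -ξ else 0) := by
    intro i j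
    rw [Matrix.mul_apply]
    have : ∀ l : Fin (m'+1), A i l * U l j =
        A i l * (if l = j then (1:ℚ_[p]) else 0) + A i l * (if (l:ℕ)+1 = (j:ℕ) then -ξ else 0) := by
      intro l
      simp only [hU, Matrix.of_apply]
      split_ifs with h1 h2 <;> first
        | (exfalso; exact absurd (congrArg Fin.val h1) (by omega))
        | ring
    rw [Finset.sum_congr rfl fun l _ => this l, Finset.sum_add_distrib]
    congr 1
    simp [Finset.sum_ite_eq']
  have hentry0 : ∀ i : Fin (m'+1), ‖(A * U) i 0‖ ≤ 1 := by
    intro i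
    rw [hmul]
    have : ∀ l : Fin (m'+1), A i l * (if (l:ℕ)+1 = ((0 : Fin (m'+1)):ℕ) then -ξ else 0) = 0 := by
      intro l
      rw [if_neg (by simp), mul_zero]
    rw [Finset.sum_congr rfl fun l _ => this l, Finset.sum_const_zero, add_zero]
    exact Padic.norm_int_le_one _
  have hentry : ∀ (i j : Fin (m'+1)), (j : ℕ) ≠ 0 → ‖(A * U) i j‖ ≤ ε := by
    intro i j hj
    rw [hmul]
    obtain ⟨j', hj'⟩ : ∃ j', (j : ℕ) = j' + 1 := ⟨(j : ℕ) - 1, by omega⟩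
    have hj'm : j' < m' + 1 := by omega
    set l0 : Fin (m'+1) := ⟨j', hj'm⟩ with hl0
    have hsum : ∑ l, A i l * (if (l:ℕ)+1 = (j:ℕ) then -ξ else 0) = A i l0 * (-ξ) := by
      rw [Finset.sum_eq_single l0 (fun l _ hl => ?_) (by simp)]
      · rw [hl0, if_pos hj'.symm]
      · rw [if_neg, mul_zero]
        intro hc
        exact hl (Fin.ext (show (l:ℕ) = j' by omega))
    rw [hsum]
    set a : ℕ := k + 1 - (m'+1) + (i : ℕ) + j' with ha
    have han : a < n := by
      have hi : (i : ℕ) ≤ m' := Nat.lt_succ_iff.mp i.isLt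
      have hjle : (j : ℕ) ≤ m' := Nat.lt_succ_iff.mp j.isLt
      omega
    have h1 : A i l0 = (P a : ℚ_[p]) := rfl
    have h2 : A i j = (P (a + 1) : ℚ_[p]) := by
      have e1 : k + 1 - (m'+1) + (i : ℕ) + (j : ℕ) = a + 1 := by omega
      simp only [hA, Matrix.of_apply]
      rw [e1]
    rw [h1, h2]
    have := hrel a han
    calc ‖(P (a+1) : ℚ_[p]) + (P a : ℚ_[p]) * (-ξ)‖
        = ‖(P a : ℚ_[p]) * ξ - (P (a+1) : ℚ_[p])‖ := by rw [← norm_neg]; ring_nf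
      _ ≤ ε := this
  have hbound := det_bound_aux p (A * U) ε hε.le hentry0 hentry
  rw [show (Matrix.of fun i j : Fin (m'+1) =>
      ((P (k + 1 - (m'+1) + (i : ℕ) + (j : ℕ)) : ℚ_[p]))).det = A.det from rfl, hdet]
  refine hbound.trans ?_
  have hmn : m' + 1 ≤ n + 1 := by omega
  have hfac : ((m'+1).factorial : ℝ) ≤ ((n+1).factorial : ℝ) := by
    exact_mod_cast Nat.factorial_le hmn
  have hεp : (0:ℝ) ≤ ε ^ m' := by positivity
  calc ((m'+1).factorial : ℝ) * ε ^ m' ≤ ((n+1).factorial : ℝ) * ε ^ m' :=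
        mul_le_mul_of_nonneg_right hfac hεp
    _ = ((n+1).factorial : ℝ) * ε ^ (m' + 1 - 1) := by norm_num
end
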